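/- Over the finite field F_q, the number of ordered pairs of coprime monic polynomials of degree n equals q times the number of n×n nonsingular Hankel matrices over F_q. -/

import Mathlib

/-!
For monic `f` of degree `n` and `deg r < n`, expand `r / f = ∑ₖ sₖ X⁻⁽ᵏ⁺¹⁾`. The Hankel matrix
`(s_{i+j})` sends the coefficient vector of `p` to the coefficients of `X⁻¹, …, X⁻ⁿ` in `p r / f`,
so its kernel is `{p : deg p < n, f ∣ p r}`, which is trivial exactly when `f` and `r` are coprime.
The sequence `s` satisfies the linear recurrence with characteristic polynomial `f`; when the
Hankel matrix is invertible, `s₀, …, s₂ₙ₋₁` therefore determine the coefficients of `f`, then `r`,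
and every such sequence arises from some pair. So `(f, r) ↦ (s₂ₙ₋₁, (s_{i+j}))` is a bijection onto
`F × {nonsingular Hankel matrices}`, and `(f, g) ↦ (f, g - f)` identifies coprime pairs of monic
polynomials of degree `n` with these pairs `(f, r)`.
-/

open Polynomial

/-- A matrix is Hankel if `m i j = m r s` whenever `i + j = r + s`. -/
def IsHankel {F : Type*} {n : ℕ} (M : Matrix (Fin n) (Fin n) F) : Prop :=
  ∀ i j r s : Fin n, (i : ℕ) + (j : ℕ) = (r : ℕ) + (s : ℕ) → M i j = M r s

open Matrix

section Hankel

variable {R : Type*} {n : ℕ}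

def hankel (n : ℕ) (d : ℕ → R) : Matrix (Fin n) (Fin n) R :=
  of fun i j => d (i + j)

theorem isHankel_hankel (d : ℕ → R) : IsHankel (hankel n d) :=
  fun _ _ _ _ h => by simp only [hankel, of_apply, h]

theorem IsHankel.exists_hankel_eq [Zero R] {M : Matrix (Fin n) (Fin n) R} (hM : IsHankel M) :
    ∃ d, hankel n d = M := by
  rcases n with _ | m
  · exact ⟨0, Subsingleton.elim _ _⟩
  refine ⟨fun k => M ⟨min k m, by omega⟩ ⟨min (k - min k m) m, by omega⟩, ?_⟩
  ext i j
  exact hM _ _ _ _ (by simp only; omega)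

theorem hankel_eq_hankel_iff {d d' : ℕ → R} :
    hankel n d = hankel n d' ↔ ∀ k, k + 1 < 2 * n → d k = d' k := by
  refine ⟨fun h k hk => ?_, fun h => Matrix.ext fun i j => h _ (by omega)⟩
  have := congr_fun₂ h ⟨min k (n - 1), by omega⟩ ⟨k - min k (n - 1), by omega⟩
  simpa only [hankel, of_apply, Nat.add_sub_cancel' (Nat.min_le_left k (n - 1))] using this

theorem hankel_mulVec [CommSemiring R] [DecidableEq R] (L : R[X] →ₗ[R] R) (v : Fin n → R) :
    hankel n (fun k => L (X ^ k)) *ᵥ v = fun i : Fin n => L (X ^ (i : ℕ) * ofFn n v) := by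
  ext i
  simp only [mulVec, dotProduct, hankel, of_apply, ofFn_eq_sum_monomial, Finset.mul_sum, map_sum,
    ← smul_X_eq_monomial, mul_smul_comm, map_smul, smul_eq_mul, pow_add, mul_comm]

/-- `hankel n u *ᵥ c = -fun i => u (i + n)` is the recurrence
`u (i + n) + ∑ j, c j * u (i + j) = 0` for `i < n`. -/
theorem eq_of_hankel_mulVec_eq_neg_shift [Ring R] {u d : ℕ → R} (c : Fin n → R)
    (hu : hankel n u *ᵥ c = -fun i : Fin n => u (i + n))
    (hd : hankel n d *ᵥ c = -fun i : Fin n => d (i + n))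
    (h : ∀ k < n, u k = d k) : ∀ k < 2 * n, u k = d k := by
  intro k
  induction k using Nat.strong_induction_on with
  | _ k ih =>
    intro hk
    by_cases hkn : k < n
    · exact h k hkn
    obtain ⟨i, rfl⟩ : ∃ i, k = i + n := ⟨k - n, by omega⟩
    have hu_i := congr_fun hu ⟨i, by omega⟩
    have hd_i := congr_fun hd ⟨i, by omega⟩
    simp only [mulVec, dotProduct, hankel, of_apply, Pi.neg_apply] at hu_i hd_i
    rw [← neg_neg (u _), ← neg_neg (d _), ← hu_i, ← hd_i]
    congr 2 with j
    rw [ih _ (by omega) (by omega)]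

end Hankel

namespace Polynomial

section CommRing

variable {R : Type*} [CommRing R]

theorem ofFn_toFn_of_degree_lt [DecidableEq R] {n : ℕ} {p : R[X]} (hp : p.degree < n) :
    ofFn n (toFn n p) = p := by
  ext k
  by_cases hk : k < n
  · simp [toFn, hk]
  · rw [ofFn_coeff_eq_zero_of_ge _ (not_lt.1 hk),
      coeff_eq_zero_of_degree_lt (hp.trans_le (by exact_mod_cast not_lt.1 hk))]

theorem Monic.ofFn_toFn [DecidableEq R] {f : R[X]} (hf : f.Monic) :
    ofFn f.natDegree (toFn f.natDegree f) = f - X ^ f.natDegree := by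
  ext k
  rcases lt_trichotomy k f.natDegree with hk | rfl | hk
  · simp [toFn, hk, coeff_X_pow, hk.ne]
  · simp [hf.coeff_natDegree]
  · simp [hk.le, coeff_X_pow, hk.ne', coeff_eq_zero_of_natDegree_lt hk]

/-- `(r * p) %ₘ f` has degree `< natDegree f`, so for monic `f` this is the coefficient of `X⁻¹`
in the expansion of `r * p / f` in powers of `X⁻¹`. -/
noncomputable def fracResidue (f : R[X]) : R[X] →ₗ[R] R[X] →ₗ[R] R :=
  (LinearMap.mul R R[X]).compr₂ (lcoeff R (f.natDegree - 1) ∘ₗ modByMonicHom f)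

/-- For monic `f`, `r / f = ∑ₖ fracSeq f r k * X⁻¹ ^ (k + 1)`. -/
noncomputable def fracSeq (f r : R[X]) (k : ℕ) : R := fracResidue f r (X ^ k)

theorem fracResidue_apply (f r p : R[X]) :
    fracResidue f r p = ((r * p) %ₘ f).coeff (f.natDegree - 1) := rfl

theorem fracResidue_eq_zero_of_dvd {f r p : R[X]} (hf : f.Monic) (h : f ∣ r * p) :
    fracResidue f r p = 0 := by
  rw [fracResidue_apply, (modByMonic_eq_zero_iff_dvd hf).2 h, coeff_zero]

theorem fracSeq_sub (f r r' : R[X]) (k : ℕ) :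
    fracSeq f (r - r') k = fracSeq f r k - fracSeq f r' k := by
  simp only [fracSeq, map_sub, LinearMap.sub_apply]

theorem modByMonic_eq_zero_of_fracSeq_eq_zero [Nontrivial R] {f s : R[X]} (hf : f.Monic)
    (h : ∀ k < f.natDegree, fracSeq f s k = 0) : s %ₘ f = 0 := by
  by_contra ht
  set t := s %ₘ f
  have ht_lt : t.natDegree < f.natDegree :=
    natDegree_lt_natDegree ht (degree_modByMonic_lt s hf)
  -- shift the remainder so that its leading coefficient sits in degree `natDegree f - 1`
  set k := f.natDegree - 1 - t.natDegree
  have hdeg : t.natDegree + k = f.natDegree - 1 := by omega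
  have hshift : (s * X ^ k) %ₘ f = (t * X ^ k) %ₘ f :=
    modByMonic_eq_of_dvd_sub hf ⟨s /ₘ f * X ^ k, by
      simp only [t, modByMonic_eq_sub_mul_div s f]; ring⟩
  have hsmall : (t * X ^ k) %ₘ f = t * X ^ k :=
    (modByMonic_eq_self_iff hf).2 (degree_lt_degree (by rw [natDegree_mul_X_pow k ht]; omega))
  apply leadingCoeff_ne_zero.2 ht
  rw [← h k (by omega), fracSeq, fracResidue_apply, hshift, hsmall, ← hdeg,
    coeff_mul_X_pow, leadingCoeff]

theorem hankel_fracSeq_mulVec_eq_zero_iff [Nontrivial R] [DecidableEq R] {f : R[X]} (hf : f.Monic)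
    (r : R[X]) (v : Fin f.natDegree → R) :
    hankel f.natDegree (fracSeq f r) *ᵥ v = 0 ↔ f ∣ r * ofFn _ v := by
  unfold fracSeq
  rw [hankel_mulVec]
  constructor
  · intro h
    rw [← modByMonic_eq_zero_iff_dvd hf]
    refine modByMonic_eq_zero_of_fracSeq_eq_zero hf fun k hk => ?_
    rw [fracSeq, fracResidue_apply, mul_right_comm, mul_assoc, ← fracResidue_apply]
    exact congr_fun h ⟨k, hk⟩
  · intro h
    ext i
    exact fracResidue_eq_zero_of_dvd hf (by rw [mul_left_comm]; exact h.mul_left _)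

theorem hankel_fracSeq_mulVec_toFn [DecidableEq R] {f : R[X]} {n : ℕ} (hf : f.Monic)
    (hn : f.natDegree = n) (r : R[X]) :
    hankel n (fracSeq f r) *ᵥ toFn n f = -fun i : Fin n => fracSeq f r (i + n) := by
  subst hn
  unfold fracSeq
  rw [hankel_mulVec, hf.ofFn_toFn]
  ext i
  rw [mul_sub, ← pow_add, map_sub, fracResidue_eq_zero_of_dvd hf (dvd_mul_of_dvd_right
    (dvd_mul_left f _) r), zero_sub, Pi.neg_apply]

theorem eq_of_fracSeq_eq [Nontrivial R] {f r r' : R[X]} (hf : f.Monic)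
    (hr : r.degree < f.natDegree) (hr' : r'.degree < f.natDegree) (h : ∀ k < f.natDegree, fracSeq f r k = fracSeq f r' k) :
    r = r' := by
  have hsub : (r - r') %ₘ f = 0 :=
    modByMonic_eq_zero_of_fracSeq_eq_zero hf fun k hk => by rw [fracSeq_sub, h k hk, sub_self]
  rw [← degree_eq_natDegree hf.ne_zero] at hr hr'
  rwa [(modByMonic_eq_self_iff hf).2 ((degree_sub_le r r').trans_lt (max_lt hr hr')),
    sub_eq_zero] at hsub

end CommRing

section Field

variable {K : Type*} [Field K]

theorem isCoprime_iff_forall_dvd_mul_imp_eq_zero {f : K[X]} (hf : f ≠ 0) (r : K[X]) :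
    IsCoprime f r ↔ ∀ p : K[X], p.degree < f.degree → f ∣ r * p → p = 0 := by
  classical
  refine ⟨fun h p hp hdvd => eq_zero_of_dvd_of_degree_lt (h.dvd_of_dvd_mul_left hdvd) hp, ?_⟩
  contrapose!
  intro hnc
  obtain ⟨p, hp⟩ := gcd_dvd_left f r
  obtain ⟨s, hs⟩ := gcd_dvd_right f r
  have hg : ¬IsUnit (gcd f r) := mt (gcd_isUnit_iff f r).1 hnc
  have hg0 : gcd f r ≠ 0 := fun h => hf (by rw [hp, h, zero_mul])
  have hp0 : p ≠ 0 := fun h => hf (by rw [hp, h, mul_zero])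
  refine ⟨p, ?_, ⟨s, by rw [hs, mul_right_comm, ← hp]⟩, hp0⟩
  have hg_pos := natDegree_pos_iff_degree_pos.2 (degree_pos_of_ne_zero_of_nonunit hg0 hg)
  exact degree_lt_degree (by rw [hp, natDegree_mul hg0 hp0]; omega)

theorem isUnit_det_hankel_fracSeq_iff {f : K[X]} {n : ℕ} (hf : f.Monic) (hn : f.natDegree = n)
    (r : K[X]) : IsUnit (hankel n (fracSeq f r)).det ↔ IsCoprime f r := by
  classical
  subst hn
  rw [isUnit_iff_ne_zero, Ne, ← Matrix.exists_mulVec_eq_zero_iff,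
    isCoprime_iff_forall_dvd_mul_imp_eq_zero hf.ne_zero, degree_eq_natDegree hf.ne_zero]
  simp_rw [hankel_fracSeq_mulVec_eq_zero_iff hf]
  constructor
  · refine fun h p hp hdvd => by_contra fun hp0 => h ⟨toFn _ p, fun h0 => hp0 ?_, ?_⟩
    · rw [← ofFn_toFn_of_degree_lt hp, h0, map_zero]
    · rwa [ofFn_toFn_of_degree_lt hp]
  · rintro h ⟨v, hv, hdvd⟩
    exact hv (injective_ofFn _ (by rw [h _ (ofFn_degree_lt v) hdvd, map_zero]))

theorem exists_fracSeq_eq {f : K[X]} {n : ℕ} (hf : f.Monic) (hn : f.natDegree = n)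
    (w : Fin n → K) : ∃ r : K[X], r.degree < n ∧ ∀ k : Fin n, fracSeq f r k = w k := by
  classical
  subst hn
  let T : (Fin f.natDegree → K) →ₗ[K] Fin f.natDegree → K :=
    LinearMap.pi (fun k : Fin f.natDegree => (fracResidue f).flip (X ^ (k : ℕ))) ∘ₗ
      ofFn f.natDegree
  have hT : Function.Injective T := fun v v' h => injective_ofFn _ <|
    eq_of_fracSeq_eq hf (ofFn_degree_lt v) (ofFn_degree_lt v') fun k hk => congr_fun h ⟨k, hk⟩
  obtain ⟨v, hv⟩ := LinearMap.injective_iff_surjective.1 hT w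
  exact ⟨ofFn _ v, ofFn_degree_lt v, congr_fun hv⟩

theorem eq_and_eq_of_fracSeq_eq {f f' r r' : K[X]} {n : ℕ} (hf : f.Monic) (hf' : f'.Monic)
    (hn : f.natDegree = n) (hn' : f'.natDegree = n) (hr : r.degree < n) (hr' : r'.degree < n)
    (hcop : IsCoprime f r) (h : ∀ k < 2 * n, fracSeq f r k = fracSeq f' r' k) :
    f = f' ∧ r = r' := by
  classical
  have hH : hankel n (fracSeq f r) = hankel n (fracSeq f' r') :=
    hankel_eq_hankel_iff.2 fun k hk => h k (by omega)
  have hunit := (isUnit_det_hankel_fracSeq_iff hf hn r).2 hcop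
  have hc : toFn n f = toFn n f' := by
    refine mulVec_injective_iff_isUnit.2 ((isUnit_iff_isUnit_det _).2 hunit) ?_
    rw [hankel_fracSeq_mulVec_toFn hf hn, hH, hankel_fracSeq_mulVec_toFn hf' hn']
    ext i
    simp only [Pi.neg_apply, h _ (by omega : (i : ℕ) + n < 2 * n)]
  have hff' : f = f' := by
    have e := hf.ofFn_toFn
    have e' := hf'.ofFn_toFn
    rw [hn, hc] at e
    rw [hn'] at e'
    exact sub_left_inj.1 (e.symm.trans e')
  subst hff' hn
  exact ⟨rfl, eq_of_fracSeq_eq hf hr hr' fun k hk => h k (by omega)⟩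

theorem exists_fracSeq_eq_of_isUnit_det {n : ℕ} {d : ℕ → K} (hd : IsUnit (hankel n d).det) :
    ∃ f r : K[X], f.Monic ∧ f.natDegree = n ∧ r.degree < n ∧
      ∀ k < 2 * n, fracSeq f r k = d k := by
  classical
  set c := (hankel n d)⁻¹ *ᵥ -fun i : Fin n => d (i + n)
  have hc : hankel n d *ᵥ c = -fun i : Fin n => d (i + n) := by
    rw [mulVec_mulVec, mul_nonsing_inv _ hd, one_mulVec]
  set f := X ^ n + ofFn n c
  have hf : f.Monic := monic_X_pow_add (ofFn_degree_lt c)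
  have hfn : f.natDegree = n := by
    rw [natDegree_add_eq_left_of_degree_lt (by rw [degree_X_pow]; exact ofFn_degree_lt c),
      natDegree_X_pow]
  have hfc : toFn n f = c := by
    have e := hf.ofFn_toFn
    rw [hfn, add_sub_cancel_left] at e
    exact injective_ofFn n e
  obtain ⟨r, hr, hrd⟩ := exists_fracSeq_eq hf hfn fun k : Fin n => d k
  refine ⟨f, r, hf, hfn, hr, eq_of_hankel_mulVec_eq_neg_shift c ?_ hc fun k hk => hrd ⟨k, hk⟩⟩
  rw [← hfc]
  exact hankel_fracSeq_mulVec_toFn hf hfn r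

end Field

end Polynomial

section Counting

variable {K : Type*} [Field K]

theorem card_monic_coprime_pairs_eq_card_coprime_degree_lt (n : ℕ) :
    Nat.card {p : K[X] × K[X] //
        p.1.Monic ∧ p.1.natDegree = n ∧ p.2.Monic ∧ p.2.natDegree = n ∧ IsCoprime p.1 p.2}
      = Nat.card {p : K[X] × K[X] //
        p.1.Monic ∧ p.1.natDegree = n ∧ p.2.degree < n ∧ IsCoprime p.1 p.2} := by
  refine Nat.card_congr
    { toFun p := ⟨(p.1.1, p.1.2 - p.1.1), p.2.1, p.2.2.1, ?_, ?_⟩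
      invFun p := ⟨(p.1.1, p.1.1 + p.1.2), p.2.1, p.2.2.1, ?_, ?_, ?_⟩
      left_inv p := Subtype.ext (by simp)
      right_inv p := Subtype.ext (by simp) }
  · obtain ⟨⟨f, g⟩, hf, hfn, hg, hgn, _⟩ := p
    dsimp only at hf hfn hg hgn ⊢
    rw [← hgn, ← degree_eq_natDegree hg.ne_zero]
    refine degree_sub_lt_left ?_ hg.ne_zero (by rw [hg.leadingCoeff, hf.leadingCoeff])
    rw [degree_eq_natDegree hg.ne_zero, degree_eq_natDegree hf.ne_zero, hgn, hfn]
  · simpa only [mul_one] using IsCoprime.sub_mul_left_right_iff (z := 1) |>.2 p.2.2.2.2.2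
  all_goals obtain ⟨⟨f, r⟩, hf, hfn, hr, hcop⟩ := p; dsimp only at hf hfn hr hcop ⊢
  all_goals have hrf : r.degree < f.degree := by rwa [degree_eq_natDegree hf.ne_zero, hfn]
  · exact hf.add_of_left hrf
  · rwa [natDegree_add_eq_left_of_degree_lt hrf]
  · simpa only [mul_one] using IsCoprime.mul_add_left_right_iff (z := 1) |>.2 hcop

theorem card_coprime_degree_lt_eq_card_mul_card_hankel {n : ℕ} (hn : 1 ≤ n) :
    Nat.card {p : K[X] × K[X] //
        p.1.Monic ∧ p.1.natDegree = n ∧ p.2.degree < n ∧ IsCoprime p.1 p.2}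
      = Nat.card K * Nat.card {M : Matrix (Fin n) (Fin n) K // IsHankel M ∧ IsUnit M.det} := by
  rw [← Nat.card_prod]
  refine Nat.card_eq_of_bijective (fun p =>
    (fracSeq p.1.1 p.1.2 (2 * n - 1), ⟨hankel n (fracSeq p.1.1 p.1.2), isHankel_hankel _,
      (isUnit_det_hankel_fracSeq_iff p.2.1 p.2.2.1 p.1.2).2 p.2.2.2.2⟩)) ⟨?_, ?_⟩
  · rintro ⟨⟨f, r⟩, hf, hfn, hr, hcop⟩ ⟨⟨f', r'⟩, hf', hfn', hr', _⟩ h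
    simp only [Prod.mk.injEq, Subtype.mk.injEq, hankel_eq_hankel_iff] at h
    obtain ⟨rfl, rfl⟩ := eq_and_eq_of_fracSeq_eq hf hf' hfn hfn' hr hr' hcop fun k hk => by
      rcases (by omega : k + 1 < 2 * n ∨ k = 2 * n - 1) with hk | rfl
      exacts [h.2 k hk, h.1]
    rfl
  · rintro ⟨a, M, hM, hdet⟩
    obtain ⟨d, rfl⟩ := hM.exists_hankel_eq
    have hH : hankel n (Function.update d (2 * n - 1) a) = hankel n d :=
      hankel_eq_hankel_iff.2 fun k hk => Function.update_of_ne (by omega) _ _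
    obtain ⟨f, r, hf, hfn, hr, hfr⟩ := exists_fracSeq_eq_of_isUnit_det (hH ▸ hdet)
    have hfrH : hankel n (fracSeq f r) = hankel n d :=
      hH ▸ hankel_eq_hankel_iff.2 fun k hk => hfr k (by omega)
    refine ⟨⟨(f, r), hf, hfn, hr, (isUnit_det_hankel_fracSeq_iff hf hfn r).1 (hfrH ▸ hdet)⟩, ?_⟩
    simp only [hfrH, hfr _ (by omega : 2 * n - 1 < 2 * n), Function.update_self]

end Counting

/-- Over `F_q`, the number of ordered pairs of coprime monic polynomials of degree `n`
equals `q` times the number of `n × n` nonsingular Hankel matrices. -/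
theorem coprime_pairs_eq_q_mul_hankel (F : Type*) [Field F] [Fintype F] (n : ℕ)
    (hn : 1 ≤ n) :
    Nat.card {p : F[X] × F[X] //
        p.1.Monic ∧ p.1.natDegree = n ∧ p.2.Monic ∧ p.2.natDegree = n ∧ IsCoprime p.1 p.2}
      = Fintype.card F *
          Nat.card {M : Matrix (Fin n) (Fin n) F // IsHankel M ∧ IsUnit M.det} := by
  rw [card_monic_coprime_pairs_eq_card_coprime_degree_lt,
    card_coprime_degree_lt_eq_card_mul_card_hankel hn, Nat.card_eq_fintype_card]
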